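/- The map Φ sending e_v to e_{(0)⌢v} extends to an isometric isomorphism from T_k(d,θ) onto its image in T_{k+1}(d,θ): for every finitely supported x, ‖Φ(x)‖_{T_{k+1}(d,θ)} = ‖x‖_{T_k(d,θ)}. -/

import Mathlib

/-- Non-decreasing list of naturals. -/
abbrev NonDec (l : List ℕ) : Prop := l.Chain' (· ≤ ·)

/-- The order `≺` on nondecreasing sequences: the empty sequence is minimal;
nonempty sequences are compared by last entry, with lexicographic tie-breaking. -/
def prec (s t : List ℕ) : Prop :=
  (s = [] ∧ t ≠ []) ∨
  (s ≠ [] ∧ t ≠ [] ∧ (s.getLast! < t.getLast! ∨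
    (s.getLast! = t.getLast! ∧ List.Lex (· < ·) s t)))

/-- The map `X̂_v`: `(m_1,…,m_l) ↦ (f_1(m_1),…,f_l(m_l))` where
`f_j(0) = n_j` and `f_j(m) = n_k + m` for `m ≥ 1`, `v = (n_1,…,n_k)`. -/
def Xhat (v s : List ℕ) : List ℕ :=
  List.zipWith (fun a b => if b = 0 then a else v.getLast! + b) (v.take s.length) s

/-- The set `X_v^max`, described by its characterization:
`w ∈ X_v^max` iff `w` is nondecreasing of the same length as `v` and either
`w_1 > n_k`, or there is `1 ≤ i ≤ k` with `(w_1,…,w_i) = (n_1,…,n_i)` and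
(if `i < k`) `w_{i+1} > n_k`. -/
def XmaxSet (v : List ℕ) : Set (List ℕ) :=
  { w | w.length = v.length ∧ NonDec w ∧
    (v.getLast! < w.headI ∨
      ∃ i, 1 ≤ i ∧ i ≤ v.length ∧ w.take i = v.take i ∧
        (i < v.length → v.getLast! < w.getD i 0)) }

/-- An `E_k`-tree: a map on `ω^{≤k}` sending nondecreasing sequences of length `≤ k`
to nondecreasing sequences of the same length, preserving `≺` and initial segments. -/
def IsEkTree (k : ℕ) (X : List ℕ → List ℕ) : Prop :=
  (∀ s, NonDec s → s.length ≤ k → NonDec (X s) ∧ (X s).length = s.length) ∧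
  (∀ s t, NonDec s → NonDec t → s.length ≤ k → t.length ≤ k →
    (prec s t → prec (X s) (X t)) ∧ (s <+: t → X s <+: X t))

/-- `E ∈ AR^k`: `E` is a finite `≺`-initial segment of the restriction to `ω^{[k]}`
of some `E_k`-tree. -/
def memAR (k : ℕ) (E : Finset (List ℕ)) : Prop :=
  ∃ X : List ℕ → List ℕ, IsEkTree k X ∧
    (∀ e ∈ E, ∃ s, NonDec s ∧ s.length = k ∧ e = X s) ∧
    (∀ s, NonDec s → s.length = k → ∀ e ∈ E, prec (X s) e → X s ∈ E)

/-- `ω^{[k]}`: nondecreasing sequences of naturals of length exactly `k`. -/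
abbrev Vec (k : ℕ) := {l : List ℕ // NonDec l ∧ l.length = k}

/-- Restriction `Ex` of a finitely supported vector to a set of coordinates. -/
noncomputable def restrict {k : ℕ} (E : Finset (Vec k)) (x : Vec k →₀ ℝ) : Vec k →₀ ℝ :=
  x.filter (fun v => v ∈ E)

/-- `A < B`: every element of `A` is `≺`-below every element of `B`. -/
def Successive {k : ℕ} (A B : Finset (Vec k)) : Prop :=
  ∀ a ∈ A, ∀ b ∈ B, prec a.1 b.1

/-- Membership in `AR^k` for finite sets of elements of `ω^{[k]}`. -/
def memARV (k : ℕ) (E : Finset (Vec k)) : Prop :=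
  memAR k (E.image Subtype.val)

/-- A `d`-admissible sequence: at most `d` many `≺`-successive members of `AR^k`. -/
def Admissible (k d : ℕ) {m : ℕ} (E : Fin m → Finset (Vec k)) : Prop :=
  m ≤ d ∧ (∀ i, memARV k (E i)) ∧ ∀ i j, i < j → Successive (E i) (E j)

/-- The nondecreasing sequence of norms `|x|_j` defining the Tsirelson-type norm:
`|x|_0 = max |x_v|`, and `|x|_{j+1}` is the max of `|x|_j` and
`θ ∑ |E_i x|_j` over admissible sequences `(E_i)_{i=1}^m`, `1 ≤ m ≤ d`. -/
noncomputable def normSeq (k d : ℕ) (θ : ℝ) : ℕ → (Vec k →₀ ℝ) → ℝ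
  | 0, x => ⨆ v, |x v|
  | j + 1, x => max (normSeq k d θ j x)
      (sSup { r | ∃ m : ℕ, 1 ≤ m ∧ ∃ E : Fin m → Finset (Vec k),
        Admissible k d E ∧ r = θ * ∑ i, normSeq k d θ j (restrict (E i) x) })

/-- The norm of `T_k(d,θ)` on finitely supported vectors. -/
noncomputable def tnorm (k d : ℕ) (θ : ℝ) (x : Vec k →₀ ℝ) : ℝ :=
  ⨆ j, normSeq k d θ j x

/-- The map `Φ : ω^{[k]} → ω^{[k+1]}`, `v ↦ (0)⌢v`. -/
def phi {k : ℕ} (v : Vec k) : Vec (k + 1) :=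
  ⟨0 :: v.1, List.isChain_cons.mpr ⟨fun y _ => Nat.zero_le y, v.2.1⟩, by simp [v.2.2]⟩

/-!
`Φ` identifies `ω^{[k]}` with the `(0)⌢·`-branch of `ω^{[k+1]}`, so it suffices that admissible
families correspond at every stage of the implicit norm. Pulling back along `Φ` preserves
successiveness and turns an `AR^{k+1}`-set into an `AR^k`-set: read the tree off its
`(0)⌢·`-branch. Conversely, if `E ∈ AR^k` comes from the tree `X`, extend `X` to `ω^{≤k+1}` by
`(0)⌢t ↦ (0)⌢X(t)` and by moving the entries of sequences with a positive first entry with a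
strictly increasing `Λ`, where `Λ(c)` lies between the last entries of the `X`-images of
sequences ending in `≤ c` and of those ending in `> c`. Such `Λ` exists because a tree strictly
increases the last entry from `(c,…,c)` to `(0,…,0,c+1)`. The `≺`-initial segment of this tree
below `Φ(E)` meets the range of `Φ` exactly in `Φ(E)` and lies between `Φ`-images of elements
of `E`, so successive families lift to successive families.
-/

namespace List

lemma getLast!_cons_of_ne_nil (a : ℕ) {l : List ℕ} (h : l ≠ []) :
    (a :: l).getLast! = l.getLast! := by
  cases l <;> simp_all

lemma getLast!_zero_cons (l : List ℕ) : (0 :: l).getLast! = l.getLast! := by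
  cases l <;> simp

lemma getLast!_replicate {n : ℕ} (h : n ≠ 0) (c : ℕ) : (replicate n c).getLast! = c := by
  simp [getLast?_replicate, h]

lemma getLast!_map (f : ℕ → ℕ) {l : List ℕ} (h : l ≠ []) : (l.map f).getLast! = f l.getLast! := by
  cases hl : l.getLast? <;> simp_all [getLast?_map]

lemma lex_replicate_or_eq {c : ℕ} {s : List ℕ} {k : ℕ} (hc : ∀ x ∈ s, x ≤ c)
    (hs : s.length ≤ k) : Lex (· < ·) s (replicate k c) ∨ s = replicate k c := by
  induction s generalizing k with
  | nil =>
    cases k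
    · exact Or.inr rfl
    · exact Or.inl Lex.nil
  | cons a s ih =>
    obtain ⟨k, rfl⟩ : ∃ k', k = k' + 1 := ⟨k - 1, by simp at hs; omega⟩
    rcases (hc a mem_cons_self).lt_or_eq with h | rfl
    · exact Or.inl (Lex.rel h)
    · rcases ih (fun x hx => hc x (mem_cons_of_mem _ hx)) (by simpa using hs) with h | h
      · exact Or.inl (Lex.cons h)
      · exact Or.inr (by rw [h, replicate_succ])

lemma lex_zeros_append_or_eq {m : ℕ} (hm : 1 ≤ m) {t : List ℕ} {n : ℕ} (htne : t ≠ [])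
    (hlen : t.length ≤ n + 1) (hlast : t.getLast! = m) :
    Lex (· < ·) (replicate n 0 ++ [m]) t ∨ replicate n 0 ++ [m] = t := by
  induction t generalizing n with
  | nil => exact absurd rfl htne
  | cons y t ih =>
    rcases t with _ | ⟨z, t⟩
    · simp only [getLast!_cons_eq_getLastD, getLastD_nil] at hlast
      subst hlast
      cases n with
      | zero => exact Or.inr rfl
      | succ n => exact Or.inl (Lex.rel hm)
    obtain ⟨n, rfl⟩ : ∃ n', n = n' + 1 := ⟨n - 1, by simp at hlen; omega⟩
    rw [replicate_succ, cons_append]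
    rcases Nat.eq_zero_or_pos y with rfl | hy
    · rcases ih (cons_ne_nil _ _) (by simp at hlen ⊢; omega)
        (by rwa [getLast!_cons_of_ne_nil _ (cons_ne_nil _ _)] at hlast) with h | h
      · exact Or.inl (Lex.cons h)
      · exact Or.inr (by rw [h])
    · exact Or.inl (Lex.rel hy)

lemma lex_replicate_zero_or_eq {t : List ℕ} :
    Lex (· < ·) (replicate t.length 0) t ∨ replicate t.length 0 = t := by
  induction t with
  | nil => exact Or.inr rfl
  | cons y t ih =>
    rw [length_cons, replicate_succ]
    rcases Nat.eq_zero_or_pos y with rfl | hy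
    · rcases ih with h | h
      · exact Or.inl (Lex.cons h)
      · exact Or.inr (by rw [h])
    · exact Or.inl (Lex.rel hy)

lemma Lex.exists_getLast!_take_lt {P Q : List ℕ} (h : Lex (· < ·) P Q)
    (hlen : P.length = Q.length) :
    ∃ n < P.length, (P.take (n + 1)).getLast! < (Q.take (n + 1)).getLast! := by
  induction h with
  | nil => simp at hlen
  | rel hab => exact ⟨0, by simp, by simpa⟩
  | @cons a l₁ l₂ _ ih =>
    obtain ⟨n, hn, hlt⟩ := ih (by simpa using hlen)
    have hne : ∀ l : List ℕ, n < l.length → l.take (n + 1) ≠ [] := fun l hl =>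
      ne_nil_of_length_pos (by simp; omega)
    have hn₂ : n < l₂.length := by simp at hlen; omega
    refine ⟨n + 1, by simpa using hn, ?_⟩
    rwa [take_succ_cons, take_succ_cons, getLast!_cons_of_ne_nil _ (hne _ hn),
      getLast!_cons_of_ne_nil _ (hne _ hn₂)]

lemma Lex.map_of_strictMono {f : ℕ → ℕ} (hf : StrictMono f) {s t : List ℕ}
    (h : Lex (· < ·) s t) : Lex (· < ·) (s.map f) (t.map f) := by
  induction h with
  | nil => exact Lex.nil
  | rel hab => exact Lex.rel (hf hab)
  | cons _ ih => exact Lex.cons ih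

end List

open List

lemma NonDec.of_cons {a : ℕ} {l : List ℕ} (h : NonDec (a :: l)) : NonDec l := h.tail

lemma NonDec.le_getLast! {l : List ℕ} (h : NonDec l) {x : ℕ} (hx : x ∈ l) : x ≤ l.getLast! := by
  induction l generalizing x with
  | nil => simp at hx
  | cons a m ih =>
    rcases m with _ | ⟨b, m⟩
    · simp_all
    rw [getLast!_cons_of_ne_nil _ (cons_ne_nil b m)]
    rcases mem_cons.1 hx with rfl | hx
    · exact (isChain_cons_cons.1 h).1.trans (ih h.of_cons (mem_cons_self (a := b)))
    · exact ih h.of_cons hx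

lemma nonDec_zero_cons {l : List ℕ} (h : NonDec l) : NonDec (0 :: l) :=
  isChain_cons.2 ⟨fun y _ => y.zero_le, h⟩

lemma nonDec_replicate (n c : ℕ) : NonDec (replicate n c) :=
  isChain_replicate_of_rel n le_rfl

lemma nonDec_replicate_zero_append (n m : ℕ) : NonDec (replicate n 0 ++ [m]) := by
  induction n with
  | zero => exact isChain_singleton m
  | succ n ih => exact nonDec_zero_cons ih

lemma prec_irrefl (s : List ℕ) : ¬ prec s s := by
  rintro (⟨rfl, h⟩ | ⟨-, -, h | ⟨-, h⟩⟩)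
  · exact h rfl
  · exact lt_irrefl _ h
  · exact lex_irrefl (fun a => lt_irrefl a) _ h

lemma prec.ne_nil {s t : List ℕ} (h : prec s t) : t ≠ [] := by
  rcases h with ⟨-, h⟩ | ⟨-, h, -⟩ <;> exact h

lemma prec_nil_left {t : List ℕ} (h : t ≠ []) : prec [] t := Or.inl ⟨rfl, h⟩

lemma prec.getLast!_le {s t : List ℕ} (h : prec s t) : s.getLast! ≤ t.getLast! := by
  rcases h with ⟨rfl, -⟩ | ⟨-, -, h | ⟨h, -⟩⟩
  · exact Nat.zero_le _
  · exact h.le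
  · exact h.le

lemma prec_of_getLast!_lt {s t : List ℕ} (hs : s ≠ []) (ht : t ≠ [])
    (h : s.getLast! < t.getLast!) : prec s t :=
  Or.inr ⟨hs, ht, Or.inl h⟩

lemma prec_of_getLast!_le_of_lex {s t : List ℕ} (hs : s ≠ []) (ht : t ≠ [])
    (hle : s.getLast! ≤ t.getLast!) (h : Lex (· < ·) s t) : prec s t := by
  rcases hle.lt_or_eq with hlt | he
  · exact prec_of_getLast!_lt hs ht hlt
  · exact Or.inr ⟨hs, ht, Or.inr ⟨he, h⟩⟩

lemma prec.trans {s t u : List ℕ} (h₁ : prec s t) (h₂ : prec t u) : prec s u := by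
  have hu := h₂.ne_nil
  rcases h₁ with ⟨rfl, -⟩ | ⟨hs, ht, h₁⟩
  · exact prec_nil_left hu
  rcases h₂ with ⟨rfl, -⟩ | ⟨-, -, h₂⟩
  · exact absurd rfl ht
  refine Or.inr ⟨hs, hu, ?_⟩
  rcases h₁ with h₁ | ⟨e₁, l₁⟩ <;> rcases h₂ with h₂ | ⟨e₂, l₂⟩
  · exact Or.inl (h₁.trans h₂)
  · exact Or.inl (e₂ ▸ h₁)
  · exact Or.inl (e₁ ▸ h₂)
  · exact Or.inr ⟨e₁.trans e₂, lex_trans (fun h h' => lt_trans h h') l₁ l₂⟩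

lemma prec_singleton_iff {a b : ℕ} : prec [a] [b] ↔ a < b := by
  refine ⟨fun h => ?_, fun h => prec_of_getLast!_lt (cons_ne_nil _ _) (cons_ne_nil _ _) (by simpa)⟩
  rcases h with ⟨h, -⟩ | ⟨-, -, h | ⟨-, h⟩⟩
  · exact absurd h (cons_ne_nil _ _)
  · simpa using h
  · simpa [cons_lex_cons_iff] using h

lemma prec_cons_cons_iff {a : ℕ} {s t : List ℕ} (hs : NonDec (a :: s)) (ht : NonDec (a :: t)) :
    prec (a :: s) (a :: t) ↔ prec s t := by
  have hsa : a ≤ (a :: s).getLast! := hs.le_getLast! mem_cons_self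
  have hta : a ≤ (a :: t).getLast! := ht.le_getLast! mem_cons_self
  rcases eq_or_ne s [] with rfl | hs₀ <;> rcases eq_or_ne t [] with rfl | ht₀
  · simp only [prec_irrefl]
  · refine iff_of_true ?_ (prec_nil_left ht₀)
    obtain ⟨b, t, rfl⟩ := exists_cons_of_ne_nil ht₀
    exact prec_of_getLast!_le_of_lex (cons_ne_nil _ _) (cons_ne_nil _ _) (by simpa using hta)
      (Lex.cons Lex.nil)
  · refine iff_of_false ?_ (fun h => h.ne_nil rfl)
    rintro (⟨h, -⟩ | ⟨-, -, h | ⟨-, h⟩⟩)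
    · exact cons_ne_nil _ _ h
    · rw [show [a].getLast! = a by simp] at h; omega
    · simp [cons_lex_cons_iff] at h
  · rw [prec, prec, getLast!_cons_of_ne_nil _ hs₀, getLast!_cons_of_ne_nil _ ht₀]
    simp [hs₀, ht₀, cons_lex_cons_iff]

def precEq (s t : List ℕ) : Prop := prec s t ∨ s = t

lemma precEq.getLast!_le {s t : List ℕ} (h : precEq s t) : s.getLast! ≤ t.getLast! := by
  rcases h with h | rfl
  · exact h.getLast!_le
  · exact le_rfl

lemma precEq.trans_prec {s t u : List ℕ} (h₁ : precEq s t) (h₂ : prec t u) : prec s u := by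
  rcases h₁ with h₁ | rfl
  · exact h₁.trans h₂
  · exact h₂

lemma prec.trans_precEq {s t u : List ℕ} (h₁ : prec s t) (h₂ : precEq t u) : prec s u := by
  rcases h₂ with h₂ | rfl
  · exact h₁.trans h₂
  · exact h₁

lemma prec.map_of_strictMono {f : ℕ → ℕ} (hf : StrictMono f) {s t : List ℕ} (h : prec s t) :
    prec (s.map f) (t.map f) := by
  rcases h with ⟨rfl, ht⟩ | ⟨hs, ht, h | ⟨he, h⟩⟩
  · exact prec_nil_left (by simpa using ht)
  · exact prec_of_getLast!_lt (by simpa using hs) (by simpa using ht)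
      (by rw [getLast!_map f hs, getLast!_map f ht]; exact hf h)
  · exact prec_of_getLast!_le_of_lex (by simpa using hs) (by simpa using ht)
      (by rw [getLast!_map f hs, getLast!_map f ht, he]) (h.map_of_strictMono hf)

lemma precEq_cons_cons_iff {a : ℕ} {s t : List ℕ} (hs : NonDec (a :: s))
    (ht : NonDec (a :: t)) : precEq (a :: s) (a :: t) ↔ precEq s t := by
  rw [precEq, precEq, prec_cons_cons_iff hs ht, cons.injEq]
  simp

lemma precEq_of_lex_or_eq {s t : List ℕ} (hs : s ≠ []) (ht : t ≠ [])
    (hlast : s.getLast! = t.getLast!) (h : Lex (· < ·) s t ∨ s = t) : precEq s t := by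
  rcases h with h | h
  · exact Or.inl (Or.inr ⟨hs, ht, Or.inr ⟨hlast, h⟩⟩)
  · exact Or.inr h

lemma precEq_replicate {s : List ℕ} {k c : ℕ} (hs : NonDec s) (hlen : s.length ≤ k)
    (hc : s.getLast! ≤ c) : precEq s (replicate k c) := by
  rcases eq_or_ne s [] with rfl | hs₀
  · cases k
    · exact Or.inr rfl
    · exact Or.inl (prec_nil_left (by simp))
  have hk : k ≠ 0 := by have := length_pos_iff.2 hs₀; omega
  have hrep : replicate k c ≠ [] := by simpa using hk
  rcases hc.lt_or_eq with h | h
  · exact Or.inl (prec_of_getLast!_lt hs₀ hrep (by rwa [getLast!_replicate hk]))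
  · exact precEq_of_lex_or_eq hs₀ hrep (by rw [getLast!_replicate hk, h])
      (lex_replicate_or_eq (fun x hx => h ▸ hs.le_getLast! hx) hlen)

lemma replicate_zero_precEq (t : List ℕ) : precEq (replicate t.length 0) t := by
  rcases eq_or_ne t [] with rfl | ht
  · exact Or.inr rfl
  have hrep : replicate t.length 0 ≠ [] := by simpa using ht
  have hlast : (replicate t.length 0).getLast! = 0 :=
    getLast!_replicate (length_pos_iff.2 ht).ne' 0
  rcases Nat.eq_zero_or_pos t.getLast! with h | h
  · exact precEq_of_lex_or_eq hrep ht (by rw [hlast, h]) lex_replicate_zero_or_eq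
  · exact Or.inl (prec_of_getLast!_lt hrep ht (by omega))

lemma zeros_append_precEq {t : List ℕ} {n m : ℕ} (htne : t ≠ [])
    (hlen : t.length ≤ n + 1) (hm : 1 ≤ m) (hmt : m ≤ t.getLast!) :
    precEq (replicate n 0 ++ [m]) t := by
  have hne : replicate n 0 ++ [m] ≠ [] := by simp
  rcases hmt.lt_or_eq with h | h
  · exact Or.inl (prec_of_getLast!_lt hne htne (by simpa using h))
  · exact precEq_of_lex_or_eq hne htne (by simpa using h)
      (lex_zeros_append_or_eq hm htne hlen h.symm)

namespace IsEkTree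

variable {k : ℕ} {X : List ℕ → List ℕ} {s t : List ℕ}

lemma nonDec (hX : IsEkTree k X) (hs : NonDec s) (hsl : s.length ≤ k) : NonDec (X s) :=
  (hX.1 s hs hsl).1

lemma length_eq (hX : IsEkTree k X) (hs : NonDec s) (hsl : s.length ≤ k) :
    (X s).length = s.length :=
  (hX.1 s hs hsl).2

lemma prec_map (hX : IsEkTree k X) (hs : NonDec s) (ht : NonDec t) (hsl : s.length ≤ k)
    (htl : t.length ≤ k) (h : prec s t) : prec (X s) (X t) :=
  (hX.2 s t hs ht hsl htl).1 h

lemma precEq_map (hX : IsEkTree k X) (hs : NonDec s) (ht : NonDec t) (hsl : s.length ≤ k)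
    (htl : t.length ≤ k) (h : precEq s t) : precEq (X s) (X t) := by
  rcases h with h | rfl
  · exact Or.inl (hX.prec_map hs ht hsl htl h)
  · exact Or.inr rfl

lemma prefix_map (hX : IsEkTree k X) (hs : NonDec s) (ht : NonDec t) (hsl : s.length ≤ k)
    (htl : t.length ≤ k) (h : s <+: t) : X s <+: X t :=
  (hX.2 s t hs ht hsl htl).2 h

lemma map_nil (hX : IsEkTree k X) : X [] = [] :=
  List.eq_nil_of_length_eq_zero (hX.length_eq List.isChain_nil (Nat.zero_le k))

lemma map_take (hX : IsEkTree k X) (hs : NonDec s) (hsl : s.length ≤ k) (j : ℕ) :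
    X (s.take j) = (X s).take j := by
  have htake : (s.take j).length ≤ k := (List.length_take_le' j s).trans hsl
  have hpre := hX.prefix_map (hs.take j) hs htake hsl (List.take_prefix j s)
  rw [List.prefix_iff_eq_take.1 hpre, hX.length_eq (hs.take j) htake, List.length_take,
    ← hX.length_eq hs hsl, ← List.take_eq_take_min]

lemma map_singleton (hX : IsEkTree k X) (hk : 1 ≤ k) (a : ℕ) : X [a] = [(X [a]).headI] := by
  have h := hX.length_eq (List.isChain_singleton a) hk
  rcases hXa : X [a] with _ | ⟨b, _ | ⟨c, l⟩⟩ <;> simp_all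

lemma strictMono_headI_map_singleton (hX : IsEkTree k X) (hk : 1 ≤ k) :
    StrictMono fun a => (X [a]).headI := by
  intro a b hab
  have h := hX.prec_map (List.isChain_singleton a) (List.isChain_singleton b) hk hk
    (prec_singleton_iff.2 hab)
  rw [hX.map_singleton hk a, hX.map_singleton hk b] at h
  exact prec_singleton_iff.1 h

lemma map_cons (hX : IsEkTree k X) {a : ℕ} (ht : NonDec (a :: t)) (htl : (a :: t).length ≤ k) :
    X (a :: t) = (X [a]).headI :: (X (a :: t)).tail := by
  have hk : 1 ≤ k := le_trans (by simp) htl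
  have hpre := hX.prefix_map (List.isChain_singleton a) ht hk htl
    (List.cons_prefix_cons.2 ⟨rfl, List.nil_prefix⟩)
  rw [hX.map_singleton hk a] at hpre
  obtain ⟨l, hl⟩ := hpre
  rw [← hl]
  rfl

lemma le_getLast!_map_replicate (hX : IsEkTree k X) (hk : 1 ≤ k) (c : ℕ) :
    c ≤ (X (List.replicate k c)).getLast! := by
  have hsing := List.isChain_singleton (R := (· ≤ ·)) c
  have h := (hX.precEq_map hsing (nonDec_replicate k c) hk (by simp)
    (precEq_replicate hsing hk (by simp))).getLast!_le
  rw [hX.map_singleton hk c] at h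
  simpa using (hX.strictMono_headI_map_singleton hk).le_apply.trans h

/-- `≺`-preservation alone only gives `≤` between last entries; strictness comes from the
prefixes: every proper prefix of `(0,…,0,c+1)` is `⪯` the prefix of `(c,…,c)` of the same
length, which rules out a `Lex`-tie between the images. -/
lemma getLast!_map_replicate_lt (hX : IsEkTree k X) (hk : 1 ≤ k) (c : ℕ) :
    (X (List.replicate k c)).getLast! < (X (List.replicate (k - 1) 0 ++ [c + 1])).getLast! := by
  have hlast : (List.replicate k c).getLast! < (List.replicate (k - 1) 0 ++ [c + 1]).getLast! := by
    rw [List.getLast!_replicate (by omega)]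
    simp
  set w₁ := List.replicate k c
  set w₂ := List.replicate (k - 1) 0 ++ [c + 1]
  have hw₁ : NonDec w₁ := nonDec_replicate k c
  have hw₂ : NonDec w₂ := nonDec_replicate_zero_append (k - 1) (c + 1)
  have hl₁ : w₁.length = k := List.length_replicate
  have hl₂ : w₂.length = k := by simp [w₂]; omega
  have hprec : prec (X w₁) (X w₂) := hX.prec_map hw₁ hw₂ hl₁.le hl₂.le
    (prec_of_getLast!_lt (by simp [w₁]; omega) (by simp [w₂]) hlast)
  by_contra! hle
  have hlex : List.Lex (· < ·) (X w₁) (X w₂) := by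
    rcases hprec with ⟨h, -⟩ | ⟨-, -, h | ⟨-, h⟩⟩
    · have := hX.length_eq hw₁ hl₁.le
      simp [h] at this; omega
    · omega
    · exact h
  obtain ⟨n, hn, hlt⟩ := hlex.exists_getLast!_take_lt
    (by rw [hX.length_eq hw₁ hl₁.le, hX.length_eq hw₂ hl₂.le, hl₁, hl₂])
  rw [hX.length_eq hw₁ hl₁.le, hl₁] at hn
  rw [← hX.map_take hw₁ hl₁.le, ← hX.map_take hw₂ hl₂.le] at hlt
  rcases (show n + 1 ≤ k by omega).lt_or_eq with hnk | hnk
  · have h₁ : w₁.take (n + 1) = List.replicate (n + 1) c := by simp [w₁]; omega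
    have h₂ : w₂.take (n + 1) = List.replicate (n + 1) 0 := by
      rw [List.take_append_of_le_length (by simp; omega)]; simp; omega
    rw [h₁, h₂] at hlt
    have hzero := replicate_zero_precEq (List.replicate (n + 1) c)
    rw [List.length_replicate] at hzero
    have := (hX.precEq_map (nonDec_replicate _ _) (nonDec_replicate _ _) (by simp; omega)
      (by simp; omega) hzero).getLast!_le
    omega
  · rw [hnk, List.take_of_length_le hl₁.le, List.take_of_length_le hl₂.le] at hlt
    omega

lemma getLast!_map_replicate_lt_getLast!_map (hX : IsEkTree k X) {c : ℕ} (ht : NonDec t)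
    (htne : t ≠ []) (htl : t.length ≤ k) (hct : c < t.getLast!) :
    (X (List.replicate k c)).getLast! < (X t).getLast! := by
  have hk : 1 ≤ k := (List.length_pos_iff.2 htne).trans_le htl
  refine (hX.getLast!_map_replicate_lt hk c).trans_le (hX.precEq_map
    (nonDec_replicate_zero_append _ _) ht (by simp; omega) htl ?_).getLast!_le
  exact zeros_append_precEq htne (by omega) (by omega) hct

end IsEkTree

def pullTree (X' : List ℕ → List ℕ) (t : List ℕ) : List ℕ := (X' (0 :: t)).tail

section PullTree

variable {k : ℕ} {X' : List ℕ → List ℕ}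

lemma IsEkTree.map_zero_cons (hX' : IsEkTree (k + 1) X') {t : List ℕ} (ht : NonDec t)
    (htl : t.length ≤ k) : X' (0 :: t) = (X' [0]).headI :: pullTree X' t :=
  hX'.map_cons (nonDec_zero_cons ht) (by simpa using htl)

lemma isEkTree_pullTree (hX' : IsEkTree (k + 1) X') : IsEkTree k (pullTree X') := by
  have hnd : ∀ {t}, NonDec t → t.length ≤ k → NonDec ((X' [0]).headI :: pullTree X' t) :=
    fun ht htl => hX'.map_zero_cons ht htl ▸
      hX'.nonDec (nonDec_zero_cons ht) (by simpa using htl)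
  refine ⟨fun t ht htl => ⟨(hnd ht htl).of_cons, ?_⟩,
    fun s t hs ht hsl htl => ⟨fun h => ?_, fun h => ?_⟩⟩
  · have := hX'.length_eq (nonDec_zero_cons ht) (by simpa using htl)
    rw [hX'.map_zero_cons ht htl] at this
    simpa using this
  · have := hX'.prec_map (nonDec_zero_cons hs) (nonDec_zero_cons ht) (by simpa using hsl)
      (by simpa using htl) ((prec_cons_cons_iff (nonDec_zero_cons hs) (nonDec_zero_cons ht)).2 h)
    rwa [hX'.map_zero_cons hs hsl, hX'.map_zero_cons ht htl,
      prec_cons_cons_iff (hnd hs hsl) (hnd ht htl)] at this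
  · have := hX'.prefix_map (nonDec_zero_cons hs) (nonDec_zero_cons ht) (by simpa using hsl)
      (by simpa using htl) (List.cons_prefix_cons.2 ⟨rfl, h⟩)
    rw [hX'.map_zero_cons hs hsl, hX'.map_zero_cons ht htl] at this
    exact (List.cons_prefix_cons.1 this).2

end PullTree

lemma phi_injective {k : ℕ} : Function.Injective (phi (k := k)) := fun _ _ h =>
  Subtype.ext (List.cons_injective (congrArg Subtype.val h))

noncomputable def pullF {k : ℕ} (E' : Finset (Vec (k + 1))) : Finset (Vec k) :=
  E'.preimage phi phi_injective.injOn

lemma mem_pullF {k : ℕ} {E' : Finset (Vec (k + 1))} {v : Vec k} : v ∈ pullF E' ↔ phi v ∈ E' :=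
  Finset.mem_preimage

lemma mem_image_val_pullF {k : ℕ} {E' : Finset (Vec (k + 1))} {l : List ℕ} :
    l ∈ (pullF E').image Subtype.val ↔ 0 :: l ∈ E'.image Subtype.val := by
  simp only [Finset.mem_image]
  constructor
  · rintro ⟨v, hv, rfl⟩
    exact ⟨phi v, mem_pullF.1 hv, rfl⟩
  · rintro ⟨w, hw, hwl⟩
    have hl : NonDec l ∧ l.length = k := by
      have := w.2
      rw [hwl] at this
      exact ⟨this.1.of_cons, by simpa using this.2⟩
    exact ⟨⟨l, hl⟩, mem_pullF.2 (by rwa [show phi ⟨l, hl⟩ = w from Subtype.ext hwl.symm]), rfl⟩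

lemma memARV_pullF {k : ℕ} {E' : Finset (Vec (k + 1))} (hE' : memARV (k + 1) E') :
    memARV k (pullF E') := by
  obtain ⟨X', hX', hcov, hclos⟩ := hE'
  have hzero : ∀ {e}, 0 :: e ∈ E'.image Subtype.val →
      (X' [0]).headI = 0 ∧ ∃ t, NonDec t ∧ t.length = k ∧ e = pullTree X' t := by
    intro e he
    obtain ⟨_ | ⟨b, t⟩, hu, hul, heq⟩ := hcov _ he
    · simp at hul
    rw [hX'.map_cons hu hul.le, List.cons.injEq] at heq
    have hb : b = 0 := by
      have := (hX'.strictMono_headI_map_singleton (by omega)).le_apply (x := b)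
      omega
    subst hb
    exact ⟨heq.1.symm, t, hu.of_cons, by simpa using hul, heq.2⟩
  refine ⟨pullTree X', isEkTree_pullTree hX', fun e he => ?_, fun s hs hsl e he h => ?_⟩
  · exact (hzero (mem_image_val_pullF.1 he)).2
  · obtain ⟨h0, t, ht, htl, rfl⟩ := hzero (mem_image_val_pullF.1 he)
    have hXs := hX'.map_zero_cons hs hsl.le
    rw [h0] at hXs
    have hnd := hX'.nonDec (nonDec_zero_cons hs) (by simp [hsl])
    have hnd' := hX'.nonDec (nonDec_zero_cons ht) (by simp [htl])
    rw [hXs] at hnd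
    rw [hX'.map_zero_cons ht htl.le, h0] at hnd'
    refine mem_image_val_pullF.2 (hXs ▸ hclos (0 :: s) (nonDec_zero_cons hs) (by simp [hsl]) _
      (mem_image_val_pullF.1 he) ?_)
    rw [hXs]
    exact (prec_cons_cons_iff hnd hnd').2 h

/-- The `Λ` of the proof: `(c,…,c)` is the `≺`-largest sequence of length `≤ k` ending in `≤ c`,
and the `max` with `c` keeps positive entries positive, also when `k = 0`. -/
def lastBound (k : ℕ) (X : List ℕ → List ℕ) (c : ℕ) : ℕ :=
  max c (X (List.replicate k c)).getLast!

section LastBound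

variable {k : ℕ} {X : List ℕ → List ℕ}

lemma le_lastBound (c : ℕ) : c ≤ lastBound k X c := le_max_left _ _

lemma getLast!_map_le_lastBound (hX : IsEkTree k X) {s : List ℕ} (hs : NonDec s)
    (hsl : s.length ≤ k) {c : ℕ} (hc : s.getLast! ≤ c) : (X s).getLast! ≤ lastBound k X c :=
  ((hX.precEq_map hs (nonDec_replicate k c) hsl (by simp)
    (precEq_replicate hs hsl hc)).getLast!_le).trans (le_max_right _ _)

lemma lastBound_lt_getLast!_map (hX : IsEkTree k X) {t : List ℕ} (ht : NonDec t)
    (htne : t ≠ []) (htl : t.length ≤ k) {c : ℕ} (hct : c < t.getLast!) :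
    lastBound k X c < (X t).getLast! := by
  have hk : 1 ≤ k := (List.length_pos_iff.2 htne).trans_le htl
  have hlt := hX.getLast!_map_replicate_lt_getLast!_map ht htne htl hct
  exact max_lt ((hX.le_getLast!_map_replicate hk c).trans_lt hlt) hlt

lemma lastBound_strictMono (hX : IsEkTree k X) : StrictMono (lastBound k X) := by
  intro c d hcd
  rcases Nat.eq_zero_or_pos k with rfl | hk
  · simpa [lastBound, hX.map_nil] using hcd
  have hne : List.replicate k d ≠ [] := by simp; omega
  calc lastBound k X c < (X (List.replicate k d)).getLast! :=
        lastBound_lt_getLast!_map hX (nonDec_replicate k d) hne (by simp)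
          (by rwa [List.getLast!_replicate (by omega)])
    _ ≤ lastBound k X d := le_max_right _ _

end LastBound

def pushTree (k : ℕ) (X : List ℕ → List ℕ) : List ℕ → List ℕ
  | [] => []
  | a :: t => if a = 0 then 0 :: X t else (a :: t).map (lastBound k X)

section PushTree

variable {k : ℕ} {X : List ℕ → List ℕ}

@[simp] lemma pushTree_zero_cons (t : List ℕ) : pushTree k X (0 :: t) = 0 :: X t := rfl

lemma pushTree_cons_of_ne_zero {a : ℕ} (ha : a ≠ 0) (t : List ℕ) :
    pushTree k X (a :: t) = (a :: t).map (lastBound k X) := if_neg ha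

lemma prec_pushTree_zero_cons_of_ne_zero (hX : IsEkTree k X) {s t : List ℕ} {b : ℕ} (hb : b ≠ 0)
    (hs : NonDec s) (hsl : s.length ≤ k) (h : prec (0 :: s) (b :: t)) :
    prec (0 :: X s) ((b :: t).map (lastBound k X)) := by
  refine prec_of_getLast!_le_of_lex (List.cons_ne_nil _ _) (by simp) ?_
    (List.Lex.rel ((Nat.pos_of_ne_zero hb).trans_le (le_lastBound b)))
  rw [List.getLast!_zero_cons, List.getLast!_map _ (List.cons_ne_nil _ _)]
  exact getLast!_map_le_lastBound hX hs hsl (List.getLast!_zero_cons s ▸ h.getLast!_le)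

lemma prec_pushTree_cons_zero_cons (hX : IsEkTree k X) {s t : List ℕ} {a : ℕ} (ha : a ≠ 0)
    (hs : NonDec (a :: s)) (ht : NonDec t) (htl : t.length ≤ k) (h : prec (a :: s) (0 :: t)) :
    prec ((a :: s).map (lastBound k X)) (0 :: X t) := by
  have ha' : a ≤ (a :: s).getLast! := hs.le_getLast! List.mem_cons_self
  have hlt : (a :: s).getLast! < t.getLast! := by
    rcases h with ⟨h, -⟩ | ⟨-, -, h | ⟨-, h⟩⟩
    · exact absurd h (List.cons_ne_nil _ _)
    · rwa [List.getLast!_zero_cons] at h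
    · simp [List.cons_lex_cons_iff] at h; omega
  have htne : t ≠ [] := by rintro rfl; simp at hlt
  refine prec_of_getLast!_lt (by simp) (List.cons_ne_nil _ _) ?_
  rw [List.getLast!_map _ (List.cons_ne_nil _ _), List.getLast!_zero_cons]
  exact lastBound_lt_getLast!_map hX ht htne htl hlt

lemma pushTree_nonDec_and_length (hX : IsEkTree k X) {s : List ℕ} (hs : NonDec s)
    (hsl : s.length ≤ k + 1) : NonDec (pushTree k X s) ∧ (pushTree k X s).length = s.length := by
  rcases s with _ | ⟨a, t⟩
  · exact ⟨List.isChain_nil, rfl⟩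
  have htl : t.length ≤ k := by simpa using hsl
  rcases eq_or_ne a 0 with rfl | ha
  · exact ⟨nonDec_zero_cons (hX.nonDec hs.of_cons htl), by simp [hX.length_eq hs.of_cons htl]⟩
  · rw [pushTree_cons_of_ne_zero ha]
    exact ⟨List.isChain_map_of_isChain _ (fun _ _ h => (lastBound_strictMono hX).monotone h) hs,
      List.length_map _⟩

lemma prec_pushTree (hX : IsEkTree k X) {s t : List ℕ} (hs : NonDec s) (ht : NonDec t)
    (hsl : s.length ≤ k + 1) (htl : t.length ≤ k + 1) (h : prec s t) :
    prec (pushTree k X s) (pushTree k X t) := by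
  rcases s with _ | ⟨a, s⟩
  · refine prec_nil_left (List.ne_nil_of_length_pos ?_)
    rw [(pushTree_nonDec_and_length hX ht htl).2]
    exact List.length_pos_iff.2 h.ne_nil
  rcases t with _ | ⟨b, t⟩
  · exact absurd rfl h.ne_nil
  have hsl' : s.length ≤ k := by simpa using hsl
  have htl' : t.length ≤ k := by simpa using htl
  rcases eq_or_ne a 0 with rfl | ha <;> rcases eq_or_ne b 0 with rfl | hb
  · rw [pushTree_zero_cons, pushTree_zero_cons, prec_cons_cons_iff
      (nonDec_zero_cons (hX.nonDec hs.of_cons hsl')) (nonDec_zero_cons (hX.nonDec ht.of_cons htl'))]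
    exact hX.prec_map hs.of_cons ht.of_cons hsl' htl' ((prec_cons_cons_iff hs ht).1 h)
  · rw [pushTree_zero_cons, pushTree_cons_of_ne_zero hb]
    exact prec_pushTree_zero_cons_of_ne_zero hX hb hs.of_cons hsl' h
  · rw [pushTree_cons_of_ne_zero ha, pushTree_zero_cons]
    exact prec_pushTree_cons_zero_cons hX ha hs ht.of_cons htl' h
  · rw [pushTree_cons_of_ne_zero ha, pushTree_cons_of_ne_zero hb]
    exact h.map_of_strictMono (lastBound_strictMono hX)

lemma isEkTree_pushTree (hX : IsEkTree k X) : IsEkTree (k + 1) (pushTree k X) := by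
  refine ⟨fun s hs hsl => pushTree_nonDec_and_length hX hs hsl,
    fun s t hs ht hsl htl => ⟨prec_pushTree hX hs ht hsl htl, fun h => ?_⟩⟩
  rcases s with _ | ⟨a, s⟩
  · exact List.nil_prefix
  rcases t with _ | ⟨b, t⟩
  · simpa using h.length_le
  obtain ⟨rfl, h'⟩ := List.cons_prefix_cons.1 h
  rcases eq_or_ne a 0 with rfl | ha
  · rw [pushTree_zero_cons, pushTree_zero_cons]
    exact List.cons_prefix_cons.2
      ⟨rfl, hX.prefix_map hs.of_cons ht.of_cons (by simpa using hsl) (by simpa using htl) h'⟩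
  · rw [pushTree_cons_of_ne_zero ha, pushTree_cons_of_ne_zero ha]
    exact h.map _

end PushTree

lemma finite_setOf_getLast!_le (K N : ℕ) : {w : Vec K | w.1.getLast! ≤ N}.Finite := by
  refine (((List.finite_length_eq (Fin (N + 1)) K).image (List.map Fin.val)).preimage
    Subtype.val_injective.injOn).subset fun w hw => ?_
  have hbound : ∀ x ∈ w.1, x < N + 1 := fun x hx =>
    Nat.lt_succ_of_le ((w.2.1.le_getLast! hx).trans hw)
  exact ⟨w.1.pmap (fun x hx => (⟨x, hx⟩ : Fin (N + 1))) hbound, by simp [w.2.2],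
    by simp [List.map_pmap]⟩

lemma finite_treeSegment (K : ℕ) (Y : List ℕ → List ℕ) (B : Finset (List ℕ)) :
    {w : Vec K | (∃ u : Vec K, w.1 = Y u.1) ∧ ∃ b ∈ B, precEq w.1 b}.Finite :=
  (finite_setOf_getLast!_le K (B.sup List.getLast!)).subset fun _ ⟨_, _, hb, h⟩ =>
    h.getLast!_le.trans (Finset.le_sup (f := List.getLast!) hb)

noncomputable def treeSegment (K : ℕ) (Y : List ℕ → List ℕ) (B : Finset (List ℕ)) :
    Finset (Vec K) :=
  (finite_treeSegment K Y B).toFinset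

lemma mem_treeSegment {K : ℕ} {Y : List ℕ → List ℕ} {B : Finset (List ℕ)} {w : Vec K} :
    w ∈ treeSegment K Y B ↔ (∃ u : Vec K, w.1 = Y u.1) ∧ ∃ b ∈ B, precEq w.1 b :=
  Set.Finite.mem_toFinset _

lemma memARV_treeSegment {K : ℕ} {Y : List ℕ → List ℕ} (hY : IsEkTree K Y) (B : Finset (List ℕ)) :
    memARV K (treeSegment K Y B) := by
  refine ⟨Y, hY, fun e he => ?_, fun s hs hsl e he h => ?_⟩
  · obtain ⟨w, hw, rfl⟩ := Finset.mem_image.1 he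
    obtain ⟨⟨u, hu⟩, -⟩ := mem_treeSegment.1 hw
    exact ⟨u.1, u.2.1, u.2.2, hu⟩
  · obtain ⟨w, hw, rfl⟩ := Finset.mem_image.1 he
    obtain ⟨-, b, hb, hwb⟩ := mem_treeSegment.1 hw
    let v : Vec K := ⟨Y s, hY.nonDec hs hsl.le, (hY.length_eq hs hsl.le).trans hsl⟩
    exact Finset.mem_image_of_mem Subtype.val (mem_treeSegment.2
      ⟨⟨⟨s, hs, hsl⟩, rfl⟩, b, hb, Or.inl (h.trans_precEq hwb)⟩ : v ∈ _)

def IsTreeSegment (k : ℕ) (X : List ℕ → List ℕ) (E : Finset (List ℕ)) : Prop :=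
  (∀ e ∈ E, ∃ s, NonDec s ∧ s.length = k ∧ e = X s) ∧
    ∀ s, NonDec s → s.length = k → ∀ e ∈ E, prec (X s) e → X s ∈ E

lemma IsTreeSegment.exists_mem_of_precEq {k : ℕ} {X : List ℕ → List ℕ} {E : Finset (Vec k)}
    (hE : IsTreeSegment k X (E.image Subtype.val)) {s : List ℕ} (hs : NonDec s)
    (hsl : s.length = k) {a : Vec k} (ha : a ∈ E) (h : precEq (X s) a.1) : ∃ e ∈ E, e.1 = X s := by
  rcases h with h | h
  · exact Finset.mem_image.1 (hE.2 s hs hsl a.1 (Finset.mem_image_of_mem _ ha) h)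
  · exact ⟨a, ha, h.symm⟩

noncomputable def liftSegment {k : ℕ} (X : List ℕ → List ℕ) (E : Finset (Vec k)) :
    Finset (Vec (k + 1)) :=
  treeSegment (k + 1) (pushTree k X) (E.image fun a => (phi a).1)

section LiftSegment

variable {k : ℕ} {X : List ℕ → List ℕ} {E : Finset (Vec k)}

lemma memARV_liftSegment (hX : IsEkTree k X) : memARV (k + 1) (liftSegment X E) :=
  memARV_treeSegment (isEkTree_pushTree hX) _

lemma exists_precEq_phi_of_mem_liftSegment {w : Vec (k + 1)} (hw : w ∈ liftSegment X E) :
    ∃ a ∈ E, precEq w.1 (phi a).1 := by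
  obtain ⟨-, b, hb, hwb⟩ := mem_treeSegment.1 hw
  obtain ⟨a, ha, rfl⟩ := Finset.mem_image.1 hb
  exact ⟨a, ha, hwb⟩

lemma pullF_liftSegment (hE : IsTreeSegment k X (E.image Subtype.val)) :
    pullF (liftSegment X E) = E := by
  ext v
  rw [mem_pullF, liftSegment, mem_treeSegment]
  constructor
  · rintro ⟨⟨⟨_ | ⟨c, t⟩, hu, hul⟩, heq⟩, b, hb, hvb⟩
    · simp at hul
    obtain ⟨a, ha, rfl⟩ := Finset.mem_image.1 hb
    rcases eq_or_ne c 0 with rfl | hc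
    · simp only [phi, pushTree_zero_cons, List.cons.injEq, true_and] at heq
      rw [phi, phi, precEq_cons_cons_iff (nonDec_zero_cons v.2.1) (nonDec_zero_cons a.2.1),
        heq] at hvb
      obtain ⟨e, he, hev⟩ := hE.exists_mem_of_precEq hu.of_cons (by simpa using hul) ha hvb
      rwa [Subtype.ext (hev.trans heq.symm)] at he
    · have := le_lastBound (k := k) (X := X) c
      simp [phi, pushTree_cons_of_ne_zero hc] at heq
      omega
  · intro hv
    obtain ⟨t, ht, htl, hvt⟩ := hE.1 v.1 (Finset.mem_image_of_mem _ hv)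
    exact ⟨⟨⟨0 :: t, nonDec_zero_cons ht, by simp [htl]⟩, by simp [phi, hvt]⟩, _,
      Finset.mem_image_of_mem _ hv, Or.inr rfl⟩

/-- The witness is `X(0,…,0)`, the `≺`-least element of `X(ω^{[k]})`. -/
lemma exists_phi_precEq_of_mem_liftSegment (hX : IsEkTree k X)
    (hE : IsTreeSegment k X (E.image Subtype.val)) {w : Vec (k + 1)} (hw : w ∈ liftSegment X E) :
    ∃ e ∈ E, precEq (phi e).1 w.1 := by
  obtain ⟨⟨u, hu⟩, b, hb, -⟩ := mem_treeSegment.1 hw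
  obtain ⟨a, ha, -⟩ := Finset.mem_image.1 hb
  obtain ⟨t, ht, htl, hat⟩ := hE.1 a.1 (Finset.mem_image_of_mem _ ha)
  have h₀ : precEq (X (List.replicate k 0)) a.1 := by
    have := replicate_zero_precEq t
    rw [htl] at this
    exact hat ▸ hX.precEq_map (nonDec_replicate k 0) ht (by simp) htl.le this
  obtain ⟨e, he, hee⟩ := hE.exists_mem_of_precEq (nonDec_replicate k 0) (by simp) ha h₀
  refine ⟨e, he, ?_⟩
  have hu₀ := replicate_zero_precEq u.1
  rw [u.2.2] at hu₀
  have := (isEkTree_pushTree hX).precEq_map (nonDec_replicate _ _) u.2.1 (by simp) u.2.2.le hu₀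
  rw [hu]
  convert this using 1
  simp [phi, hee, List.replicate_succ]

end LiftSegment

lemma exists_lift {k : ℕ} {E : Finset (Vec k)} (hE : memARV k E) :
    ∃ E' : Finset (Vec (k + 1)), memARV (k + 1) E' ∧ pullF E' = E ∧
      (∀ w ∈ E', ∃ a ∈ E, precEq w.1 (phi a).1) ∧ ∀ w ∈ E', ∃ e ∈ E, precEq (phi e).1 w.1 := by
  obtain ⟨X, hX, hE⟩ := hE
  exact ⟨liftSegment X E, memARV_liftSegment hX, pullF_liftSegment hE,
    fun _ => exists_precEq_phi_of_mem_liftSegment,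
    fun _ => exists_phi_precEq_of_mem_liftSegment hX hE⟩

lemma prec_phi_iff {k : ℕ} {v w : Vec k} : prec (phi v).1 (phi w).1 ↔ prec v.1 w.1 :=
  prec_cons_cons_iff (nonDec_zero_cons v.2.1) (nonDec_zero_cons w.2.1)

lemma Successive.pullF {k : ℕ} {E' F' : Finset (Vec (k + 1))} (h : Successive E' F') :
    Successive (pullF E') (pullF F') := fun _ ha _ hb =>
  prec_phi_iff.1 (h _ (mem_pullF.1 ha) _ (mem_pullF.1 hb))

lemma Successive.of_bounds {k : ℕ} {E F : Finset (Vec k)} {E' F' : Finset (Vec (k + 1))}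
    (h : Successive E F) (hE' : ∀ w ∈ E', ∃ a ∈ E, precEq w.1 (phi a).1)
    (hF' : ∀ w ∈ F', ∃ e ∈ F, precEq (phi e).1 w.1) : Successive E' F' := by
  intro w hw w' hw'
  obtain ⟨a, ha, hwa⟩ := hE' w hw
  obtain ⟨e, he, hew⟩ := hF' w' hw'
  exact (hwa.trans_prec (prec_phi_iff.2 (h a ha e he))).trans_precEq hew

lemma restrict_mapDomain_phi {k : ℕ} (E' : Finset (Vec (k + 1))) (x : Vec k →₀ ℝ) :
    restrict E' (x.mapDomain phi) = (restrict (pullF E') x).mapDomain phi := by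
  ext w
  by_cases hw : w ∈ Set.range phi
  · obtain ⟨v, rfl⟩ := hw
    simp [restrict, Finsupp.filter_apply, Finsupp.mapDomain_apply phi_injective, mem_pullF]
  · simp [restrict, Finsupp.filter_apply, Finsupp.mapDomain_of_notMem_range _ _ hw]

lemma Finsupp.bddAbove_range_abs {α : Type*} (x : α →₀ ℝ) : BddAbove (Set.range fun a => |x a|) :=
  (x.finite_range.image abs).bddAbove.mono (Set.range_comp abs x).le

lemma Finsupp.iSup_abs_mapDomain {α β : Type*} [Nonempty α] {f : α → β}
    (hf : Function.Injective f) (x : α →₀ ℝ) : ⨆ b, |x.mapDomain f b| = ⨆ a, |x a| := by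
  have : Nonempty β := ⟨f (Classical.arbitrary α)⟩
  refine le_antisymm (ciSup_le fun b => ?_) (ciSup_le fun a => ?_)
  · by_cases hb : b ∈ Set.range f
    · obtain ⟨a, rfl⟩ := hb
      rw [Finsupp.mapDomain_apply hf]
      exact le_ciSup x.bddAbove_range_abs a
    · rw [Finsupp.mapDomain_of_notMem_range _ _ hb, abs_zero]
      exact Real.iSup_nonneg fun _ => abs_nonneg _
  · rw [← Finsupp.mapDomain_apply hf x a]
    exact le_ciSup (x.mapDomain f).bddAbove_range_abs (f a)

instance {k : ℕ} : Nonempty (Vec k) := ⟨⟨List.replicate k 0, nonDec_replicate k 0, by simp⟩⟩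

lemma normSeq_mapDomain_phi (k d : ℕ) (θ : ℝ) (j : ℕ) (x : Vec k →₀ ℝ) :
    normSeq (k + 1) d θ j (x.mapDomain phi) = normSeq k d θ j x := by
  induction j generalizing x with
  | zero => exact Finsupp.iSup_abs_mapDomain phi_injective x
  | succ j ih =>
    simp only [normSeq, ih]
    congr 2
    ext r
    constructor
    · rintro ⟨m, hm, E', ⟨hmd, hE', hsucc⟩, rfl⟩
      exact ⟨m, hm, fun i => pullF (E' i),
        ⟨hmd, fun i => memARV_pullF (hE' i), fun i j hij => (hsucc i j hij).pullF⟩,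
        by simp [restrict_mapDomain_phi, ih]⟩
    · rintro ⟨m, hm, E, ⟨hmd, hE, hsucc⟩, rfl⟩
      choose E' hE' hpull hup hlow using fun i => exists_lift (hE i)
      exact ⟨m, hm, E', ⟨hmd, hE', fun i j hij => (hsucc i j hij).of_bounds (hup i) (hlow j)⟩,
        by simp [restrict_mapDomain_phi, hpull, ih]⟩

theorem phi_isometry_general (k d : ℕ) (θ : ℝ) (x : Vec k →₀ ℝ) :
    tnorm (k + 1) d θ (Finsupp.mapDomain phi x) = tnorm k d θ x := by
  simp only [tnorm, normSeq_mapDomain_phi]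

/-- `Φ` extends to an isometric isomorphism of `T_k(d,θ)` onto its
image in `T_{k+1}(d,θ)`: for every finitely supported `x`,
`‖Φ(x)‖_{T_{k+1}(d,θ)} = ‖x‖_{T_k(d,θ)}`. -/
theorem phi_isometry (k d : ℕ) (hd : 2 ≤ d) (θ : ℝ) (hθ0 : 0 < θ) (hθ1 : θ < 1)
    (x : Vec k →₀ ℝ) :
    tnorm (k + 1) d θ (Finsupp.mapDomain phi x) = tnorm k d θ x :=
  phi_isometry_general k d θ x
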